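/- Let A be an n×n real symmetric positive semidefinite matrix, let i ≠ j be indices with A_{ij} ≠ 0 and A_{ii} ≠ A_{jj}, and set a = A_{ii}, b = A_{jj}, c = A_{ij}, t = sign((b−a)/c) · |c| / ( |(b−a)/2| + √(c² + ((b−a)/2)²) ). Then the updated diagonal entries satisfy 0 ≤ a − c·t ≤ √(‖A‖₁ · ‖A‖∞) and 0 ≤ b + c·t ≤ √(‖A‖₁ · ‖A‖∞). -/

import Mathlib

open Matrix

/-- Maximum absolute column sum: operator norm induced by the ℓ¹ vector norm. -/
noncomputable def colSumNorm {n : Type*} [Fintype n] (A : Matrix n n ℝ) : ℝ :=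
  ⨆ j, ∑ i, |A i j|

/-- Maximum absolute row sum: operator norm induced by the ℓ∞ vector norm. -/
noncomputable def rowSumNorm {n : Type*} [Fintype n] (A : Matrix n n ℝ) : ℝ :=
  ⨆ i, ∑ j, |A i j|

/-- Spectral norm: operator norm induced by the Euclidean vector norm. -/
noncomputable def matSpectralNorm {n : Type*} [Fintype n] [DecidableEq n] (A : Matrix n n ℝ) : ℝ :=
  ‖LinearMap.toContinuousLinearMap (Matrix.toEuclideanLin A)‖

/-!
Put `s = √(c² + ((b - a) / 2)²)`. Since `sign ((b - a) / c) · |c| · c = sign (b - a) · c²` and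
`c² = (s - |b - a| / 2) (s + |b - a| / 2)`, the rotation gives `c t = sign (b - a) · s - (b - a) / 2`,
so the updated diagonal entries are `(a + b) / 2 ∓ sign (b - a) · s`, and they lie between the
eigenvalues `(a + b) / 2 ± s` of the principal block `[[a, c], [c, b]]`. Positive semidefiniteness
of this block (`a, b ≥ 0`, `c² ≤ a b`) gives `s ≤ (a + b) / 2`, while `s ≤ |b - a| / 2 + |c|` bounds
the larger eigenvalue by `max a b + |c|`, which is at most a row sum of `|A|`. Finally, `A` being
symmetric, `‖A‖₁ = ‖A‖∞`, so `√(‖A‖₁ ‖A‖∞) = ‖A‖∞`.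
-/

namespace Real

theorem sign_mul (x y : ℝ) : sign (x * y) = sign x * sign y := by
  rcases lt_trichotomy x 0 with hx | rfl | hx <;> rcases lt_trichotomy y 0 with hy | rfl | hy <;>
    simp [sign_of_neg, sign_of_pos, mul_pos_of_neg_of_neg, mul_neg_of_neg_of_pos,
      mul_neg_of_pos_of_neg, *]

theorem sign_div (x y : ℝ) : sign (x / y) = sign x * sign y := by
  rw [div_eq_mul_inv, sign_mul, sign_inv]

theorem sign_mul_abs (x : ℝ) : sign x * |x| = x := by
  rcases lt_trichotomy x 0 with hx | rfl | hx
  · rw [sign_of_neg hx, abs_of_neg hx, neg_one_mul, neg_neg]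
  · simp
  · rw [sign_of_pos hx, abs_of_pos hx, one_mul]

theorem sqrt_sq_add_sq_le_abs_add_abs (x y : ℝ) : √(x ^ 2 + y ^ 2) ≤ |x| + |y| :=
  (sqrt_le_left (by positivity)).2
    (by nlinarith [sq_abs x, sq_abs y, mul_nonneg (abs_nonneg x) (abs_nonneg y)])

-- Also correct when `c = m = 0`, where both sides vanish (`0 / 0 = 0`).
theorem sq_div_abs_add_sqrt (c m : ℝ) :
    c ^ 2 / (|m| + √(c ^ 2 + m ^ 2)) = √(c ^ 2 + m ^ 2) - |m| := by
  have hs : √(c ^ 2 + m ^ 2) ^ 2 = c ^ 2 + m ^ 2 := sq_sqrt (by positivity)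
  have hm : |m| ≤ √(c ^ 2 + m ^ 2) := abs_le_sqrt (by nlinarith)
  rcases (add_nonneg (abs_nonneg m) ((abs_nonneg m).trans hm)).eq_or_lt with h | h
  · have hm0 : |m| = 0 := by linarith [abs_nonneg m]
    have hs0 : √(c ^ 2 + m ^ 2) = 0 := by linarith [abs_nonneg m]
    rw [← h, div_zero, hs0, hm0, sub_zero]
  · rw [div_eq_iff h.ne']
    nlinarith [sq_abs m]

end Real

open Real

noncomputable def jacobiParam (a b c : ℝ) : ℝ :=
  sign ((b - a) / c) * |c| / (|(b - a) / 2| + √(c ^ 2 + ((b - a) / 2) ^ 2))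

theorem mul_jacobiParam (a b c : ℝ) :
    c * jacobiParam a b c = sign (b - a) * √(c ^ 2 + ((b - a) / 2) ^ 2) - (b - a) / 2 := by
  have hsign : sign ((b - a) / c) * |c| * c = sign (b - a) * c ^ 2 := by
    rw [sign_div, mul_assoc (sign (b - a)) (sign c), Real.sign_mul_abs]
    ring
  have hhalf : sign (b - a) * |(b - a) / 2| = (b - a) / 2 := by
    rw [abs_div, abs_two, mul_div_assoc', Real.sign_mul_abs]
  calc c * jacobiParam a b c
      = sign ((b - a) / c) * |c| * c / (|(b - a) / 2| + √(c ^ 2 + ((b - a) / 2) ^ 2)) := by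
        rw [jacobiParam]; ring
    _ = sign (b - a) * (c ^ 2 / (|(b - a) / 2| + √(c ^ 2 + ((b - a) / 2) ^ 2))) := by
        rw [hsign, mul_div_assoc]
    _ = sign (b - a) * √(c ^ 2 + ((b - a) / 2) ^ 2) - (b - a) / 2 := by
        rw [sq_div_abs_add_sqrt, mul_sub, hhalf]

theorem sqrt_sq_add_sq_half_sub_le_half_add {a b c : ℝ} (ha : 0 ≤ a) (hb : 0 ≤ b)
    (hc : c ^ 2 ≤ a * b) : √(c ^ 2 + ((b - a) / 2) ^ 2) ≤ (a + b) / 2 :=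
  (sqrt_le_left (by linarith)).2 (by nlinarith)

theorem half_add_add_sqrt_le_max_add_abs (a b c : ℝ) :
    (a + b) / 2 + √(c ^ 2 + ((b - a) / 2) ^ 2) ≤ max a b + |c| := by
  have hs := sqrt_sq_add_sq_le_abs_add_abs c ((b - a) / 2)
  rcases abs_cases ((b - a) / 2) with ⟨h, _⟩ | ⟨h, _⟩ <;>
    linarith [le_max_left a b, le_max_right a b]

theorem jacobi_update_mem_Icc {a b c M : ℝ} (ha : 0 ≤ a) (hb : 0 ≤ b) (hc : c ^ 2 ≤ a * b)
    (hM : max a b + |c| ≤ M) :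
    a - c * jacobiParam a b c ∈ Set.Icc 0 M ∧ b + c * jacobiParam a b c ∈ Set.Icc 0 M := by
  have hlow := sqrt_sq_add_sq_half_sub_le_half_add ha hb hc
  have hup := half_add_add_sqrt_le_max_add_abs a b c
  have hs := sqrt_nonneg (c ^ 2 + ((b - a) / 2) ^ 2)
  rw [mul_jacobiParam]
  rcases sign_apply_eq (b - a) with h | h | h <;> rw [h] <;>
    refine ⟨⟨?_, ?_⟩, ⟨?_, ?_⟩⟩ <;> linarith [le_max_left a b, le_max_right a b, abs_nonneg c]

namespace Matrix

theorem PosSemidef.sq_le_mul {n : Type*} {A : Matrix n n ℝ} (hA : A.PosSemidef) (i j : n) :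
    A i j ^ 2 ≤ A i i * A j j := by
  have h := (hA.submatrix ![i, j]).det_nonneg
  have hji : A j i = A i j := by simpa using hA.isHermitian.apply i j
  rw [det_fin_two] at h
  simp only [submatrix_apply, cons_val_zero, cons_val_one, cons_val_fin_one, sub_nonneg] at h
  rwa [hji, ← sq] at h

end Matrix

section

variable {n : Type*} [Fintype n]

theorem abs_add_abs_le_rowSumNorm (A : Matrix n n ℝ) {i j : n} (hij : i ≠ j) :
    |A i i| + |A i j| ≤ rowSumNorm A :=
  (Finset.add_le_sum (f := fun k ↦ |A i k|) (fun _ _ ↦ abs_nonneg _) (Finset.mem_univ _)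
    (Finset.mem_univ _) hij).trans
    (le_ciSup (f := fun k ↦ ∑ l, |A k l|) (Set.finite_range _).bddAbove i)

theorem colSumNorm_eq_rowSumNorm {A : Matrix n n ℝ} (hA : A.IsSymm) :
    colSumNorm A = rowSumNorm A := by
  simp only [colSumNorm, rowSumNorm, hA.apply]

theorem rowSumNorm_nonneg (A : Matrix n n ℝ) : 0 ≤ rowSumNorm A :=
  Real.iSup_nonneg fun _ ↦ Finset.sum_nonneg fun _ _ ↦ abs_nonneg _

end

theorem jacobi_updated_diag_mem_Icc_general
    {n : Type*} [Fintype n] [DecidableEq n] (A : Matrix n n ℝ) (hA : A.IsSymm)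
    (hPSD : ∀ x : n → ℝ, 0 ≤ x ⬝ᵥ A.mulVec x)
    (i j : n) (hij : i ≠ j)
    (a b c t : ℝ) (ha : a = A i i) (hb : b = A j j) (hcc : c = A i j)
    (ht : t = Real.sign ((b - a) / c) * |c| /
        (|(b - a) / 2| + Real.sqrt (c ^ 2 + ((b - a) / 2) ^ 2))) :
    (0 ≤ a - c * t ∧ a - c * t ≤ Real.sqrt (colSumNorm A * rowSumNorm A)) ∧
      (0 ≤ b + c * t ∧ b + c * t ≤ Real.sqrt (colSumNorm A * rowSumNorm A)) := by
  subst ha hb hcc ht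
  have hpsd : A.PosSemidef :=
    .of_dotProduct_mulVec_nonneg (isHermitian_iff_isSymm.2 hA) (by simpa using hPSD)
  have hrow : max (A i i) (A j j) + |A i j| ≤ rowSumNorm A := by
    rw [← max_add_add_right]
    refine max_le ?_ ?_
    · linarith [le_abs_self (A i i), abs_add_abs_le_rowSumNorm A hij]
    · rw [← hA.apply i j]
      linarith [le_abs_self (A j j), abs_add_abs_le_rowSumNorm A hij.symm]
  rw [colSumNorm_eq_rowSumNorm hA, sqrt_mul_self (rowSumNorm_nonneg A)]
  exact jacobi_update_mem_Icc hpsd.diag_nonneg hpsd.diag_nonneg (hpsd.sq_le_mul i j) hrow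

/-- Let `A` be an n×n real symmetric positive semidefinite matrix, `i ≠ j` indices
with `A i j ≠ 0` and `A i i ≠ A j j`, and let `t` be the Jacobi rotation parameter
built from `a = A i i`, `b = A j j`, `c = A i j`. Then the updated diagonal entries
satisfy `0 ≤ a − c·t ≤ √(‖A‖₁ · ‖A‖∞)` and `0 ≤ b + c·t ≤ √(‖A‖₁ · ‖A‖∞)`. -/
theorem jacobi_updated_diag_mem_Icc
    {n : Type*} [Fintype n] [DecidableEq n] (A : Matrix n n ℝ) (hA : A.IsSymm)
    (hPSD : ∀ x : n → ℝ, 0 ≤ x ⬝ᵥ A.mulVec x)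
    (i j : n) (hij : i ≠ j) (hc0 : A i j ≠ 0) (hab : A i i ≠ A j j)
    (a b c t : ℝ) (ha : a = A i i) (hb : b = A j j) (hcc : c = A i j)
    (ht : t = Real.sign ((b - a) / c) * |c| /
        (|(b - a) / 2| + Real.sqrt (c ^ 2 + ((b - a) / 2) ^ 2))) :
    (0 ≤ a - c * t ∧ a - c * t ≤ Real.sqrt (colSumNorm A * rowSumNorm A)) ∧
      (0 ≤ b + c * t ∧ b + c * t ≤ Real.sqrt (colSumNorm A * rowSumNorm A)) :=
  jacobi_updated_diag_mem_Icc_general A hA hPSD i j hij a b c t ha hb hcc ht
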